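/- For every real number x > 0, f(x) < 1/3, where f(x) = 1/x² − 2φ(x)/(x(2Φ(x)−1)). -/

import Mathlib

open Real Set

/-- The standard normal probability density function. -/
noncomputable def phi (x : ℝ) : ℝ := (Real.sqrt (2 * Real.pi))⁻¹ * Real.exp (-x ^ 2 / 2)

/-- The standard normal cumulative distribution function. -/
noncomputable def Phi (x : ℝ) : ℝ := ∫ r in Set.Iic x, phi r

/-- f(x) = 1/x² − 2φ(x)/(x(2Φ(x)−1)). -/
noncomputable def f (x : ℝ) : ℝ := 1 / x ^ 2 - 2 * phi x / (x * (2 * Phi x - 1))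

lemma phi_continuous : Continuous phi := by
  unfold phi
  fun_prop

lemma phi_pos (x : ℝ) : 0 < phi x := by
  unfold phi
  positivity

lemma phi_integrable : MeasureTheory.Integrable phi := by
  have h : MeasureTheory.Integrable (fun x : ℝ => Real.exp (-(1/2 : ℝ) * x ^ 2)) :=
    integrable_exp_neg_mul_sq (by norm_num)
  have := h.const_mul (Real.sqrt (2 * Real.pi))⁻¹
  convert this using 2 with x
  unfold phi
  ring_nf

lemma integral_phi : ∫ x, phi x = 1 := by
  unfold phi
  rw [MeasureTheory.integral_const_mul]
  have : ∀ x : ℝ, Real.exp (-x ^ 2 / 2) = Real.exp (-(1/2 : ℝ) * x ^ 2) := by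
    intro x; ring_nf
  simp_rw [this]
  rw [integral_gaussian]
  have h2 : Real.sqrt (π / (1/2)) = Real.sqrt (2 * π) := by norm_num; ring_nf
  rw [h2, inv_mul_cancel₀]
  positivity

lemma Phi_zero : Phi 0 = 1 / 2 := by
  have hsym : (∫ x in Iic (0:ℝ), phi x) = ∫ x in Ioi (0:ℝ), phi x := by
    have := integral_comp_neg_Iic (0:ℝ) phi
    rw [neg_zero] at this
    rw [← this]
    congr 1
    ext x
    unfold phi
    rw [neg_sq]
  have hsplit : (∫ x in Iic (0:ℝ), phi x) + (∫ x in Ioi (0:ℝ), phi x) = ∫ x, phi x :=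
    intervalIntegral.integral_Iic_add_Ioi phi_integrable.integrableOn phi_integrable.integrableOn
  rw [integral_phi] at hsplit
  unfold Phi
  linarith [hsym ▸ hsplit]

lemma Phi_eq (x : ℝ) : Phi x = Phi 0 + ∫ t in (0:ℝ)..x, phi t := by
  unfold Phi
  rw [← intervalIntegral.integral_Iic_sub_Iic phi_integrable.integrableOn
    phi_integrable.integrableOn]
  ring

lemma hasDerivAt_Phi (x : ℝ) : HasDerivAt Phi (phi x) x := by
  have h : HasDerivAt (fun u => ∫ t in (0:ℝ)..u, phi t) (phi x) x :=
    intervalIntegral.integral_hasDerivAt_right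
      (phi_integrable.intervalIntegrable)
      (phi_continuous.stronglyMeasurableAtFilter _ _)
      phi_continuous.continuousAt
  have := (h.const_add (Phi 0))
  rw [show Phi = fun u => Phi 0 + ∫ t in (0:ℝ)..u, phi t from funext Phi_eq]
  exact this

lemma hasDerivAt_phi (x : ℝ) : HasDerivAt phi (-x * phi x) x := by
  have h1 : HasDerivAt (fun x : ℝ => -x ^ 2 / 2) (-x) x := by
    have := ((hasDerivAt_pow 2 x).neg).div_const 2
    refine this.congr_deriv ?_
    norm_num
    ring
  have h2 := (h1.exp).const_mul (Real.sqrt (2 * Real.pi))⁻¹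
  refine h2.congr_deriv ?_
  unfold phi
  ring

/-- Key: for x > 0, 2xφ(x) < 2Φ(x) − 1. -/
lemma key (x : ℝ) (hx : 0 < x) : 2 * x * phi x < 2 * Phi x - 1 := by
  have hint : (0:ℝ) < ∫ t in (0:ℝ)..x, (phi t - phi x) := by
    apply intervalIntegral.intervalIntegral_pos_of_pos_on
    · exact ((phi_continuous.sub continuous_const).intervalIntegrable 0 x)
    · intro t ht
      have h1 : t ^ 2 < x ^ 2 := by nlinarith [ht.1, ht.2]
      unfold phi
      have : Real.exp (-x ^ 2 / 2) < Real.exp (-t ^ 2 / 2) := by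
        apply Real.exp_lt_exp.mpr; linarith
      have hs : (0:ℝ) < (Real.sqrt (2 * Real.pi))⁻¹ := by positivity
      nlinarith
    · exact hx
  rw [intervalIntegral.integral_sub ((phi_continuous.intervalIntegrable 0 x))
    (intervalIntegrable_const), intervalIntegral.integral_const, sub_zero, smul_eq_mul] at hint
  have hPhi : Phi x = Phi 0 + ∫ t in (0:ℝ)..x, phi t := Phi_eq x
  rw [Phi_zero] at hPhi
  linarith

/-- The auxiliary function h. -/
noncomputable def haux (x : ℝ) : ℝ :=
  x ^ 2 * (2 * Phi x - 1) / 3 - (2 * Phi x - 1) + 2 * (x * phi x)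

lemma hasDerivAt_haux (x : ℝ) :
    HasDerivAt haux (2 * x * (2 * Phi x - 1) / 3 - 4 * x ^ 2 * phi x / 3) x := by
  have hG : HasDerivAt (fun x => 2 * Phi x - 1) (2 * phi x) x :=
    ((hasDerivAt_Phi x).const_mul 2).sub_const 1
  have h1 : HasDerivAt (fun x : ℝ => x ^ 2 * (2 * Phi x - 1))
      ((2:ℕ) * x ^ 1 * (2 * Phi x - 1) + x ^ 2 * (2 * phi x)) x :=
    (hasDerivAt_pow 2 x).mul hG
  have h2 : HasDerivAt (fun x : ℝ => x * phi x)
      (1 * phi x + x * (-x * phi x)) x :=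
    (hasDerivAt_id x).mul (hasDerivAt_phi x)
  have := ((h1.div_const 3).sub hG).add (h2.const_mul 2)
  refine this.congr_deriv ?_
  push_cast
  ring

lemma haux_pos (x : ℝ) (hx : 0 < x) : 0 < haux x := by
  have hmono : StrictMonoOn haux (Ici (0:ℝ)) := by
    apply strictMonoOn_of_deriv_pos (convex_Ici 0)
    · exact Continuous.continuousOn
        (Differentiable.continuous fun y => (hasDerivAt_haux y).differentiableAt)
    · intro y hy
      rw [interior_Ici] at hy
      rw [(hasDerivAt_haux y).deriv]
      have hy' : 0 < y := hy
      have hk := key y hy'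
      have hp := phi_pos y
      nlinarith [mul_pos hy' (sub_pos.mpr hk)]
  have h0 : haux 0 = 0 := by
    unfold haux
    rw [Phi_zero]
    ring
  have := hmono (self_mem_Ici) (mem_Ici.mpr hx.le) hx
  linarith

theorem f_lt_one_third : ∀ x : ℝ, 0 < x → f x < 1 / 3 := by
  intro x hx
  have hG : 0 < 2 * Phi x - 1 := lt_trans (by have := phi_pos x; nlinarith : (0:ℝ) < 2 * x * phi x) (key x hx)
  have hh := haux_pos x hx
  unfold haux at hh
  have hx2G : (0:ℝ) < x ^ 2 * (2 * Phi x - 1) := by positivity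
  have hfe : f x = (2 * Phi x - 1 - 2 * x * phi x) / (x ^ 2 * (2 * Phi x - 1)) := by
    unfold f
    field_simp
  rw [hfe, div_lt_div_iff₀ hx2G (by norm_num : (0:ℝ) < 3)]
  linarith
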